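/- arXiv:1605.07871 — 6 statements merged into one kernel-verified Lean document; each statement's English description precedes it below -/
import Mathlib

section
/- (Weighted Poincaré inequality with linear weight) Let ρ(x) = 1 - x/L on (0, L). For every function φ ∈ H¹_loc(0,L) with φ(0) = 0, φ ∈ L²(0,L), and ρ·φ' ∈ L²(0,L), one has ‖φ‖_{L²(0,L)} ≤ 2L·‖ρ·φ'‖_{L²(0,L)}. -/
/-!
Since `(L - x) φ' = L ρ φ'`, the derivative of `φ² (L - x)` is `2L φ (ρ φ') - φ²`. Its boundary
values vanish at `0` because `φ 0 = 0` and at `L` because of the weight, so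
`‖φ‖² = 2L ⟨φ, ρ φ'⟩ ≤ 2L ‖φ‖ ‖ρ φ'‖` by Cauchy–Schwarz; divide by `‖φ‖`.
-/

open Set MeasureTheory

section CauchySchwarz

variable {α : Type*} [MeasurableSpace α] {μ : Measure α}

theorem integral_mul_le_sqrt_integral_sq_mul_sqrt_integral_sq {f g : α → ℝ}
    (hf : MemLp f 2 μ) (hg : MemLp g 2 μ) :
    ∫ a, f a * g a ∂μ ≤ √(∫ a, f a ^ 2 ∂μ) * √(∫ a, g a ^ 2 ∂μ) := by
  have hfg : Integrable (fun a => f a * g a) μ := hf.integrable_mul hg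
  have hnorm : ∀ h : α → ℝ, ∫ a, ‖h a‖ ^ (2 : ℝ) ∂μ = ∫ a, h a ^ 2 ∂μ := fun h =>
    integral_congr_ae <| .of_forall fun a => by simp
  calc ∫ a, f a * g a ∂μ
      ≤ ∫ a, ‖f a‖ * ‖g a‖ ∂μ :=
        integral_mono hfg (by simpa [abs_mul] using hfg.norm) fun a => by
          simpa [abs_mul] using le_abs_self (f a * g a)
    _ ≤ (∫ a, ‖f a‖ ^ (2 : ℝ) ∂μ) ^ (1 / 2 : ℝ) * (∫ a, ‖g a‖ ^ (2 : ℝ) ∂μ) ^ (1 / 2 : ℝ) :=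
        integral_mul_norm_le_Lp_mul_Lq .two_two (by simpa using hf) (by simpa using hg)
    _ = √(∫ a, f a ^ 2 ∂μ) * √(∫ a, g a ^ 2 ∂μ) := by
        rw [hnorm, hnorm, Real.sqrt_eq_rpow, Real.sqrt_eq_rpow]

end CauchySchwarz

theorem aestronglyMeasurable_of_hasDerivAt_of_forall_mem {μ : Measure ℝ} {s : Set ℝ}
    (hs : MeasurableSet s) {f f' : ℝ → ℝ} (hf : ∀ x ∈ s, HasDerivAt f (f' x) x) :
    AEStronglyMeasurable f' (μ.restrict s) :=
  (measurable_deriv f).aestronglyMeasurable.congr <|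
    ae_restrict_of_forall_mem hs fun x hx => (hf x hx).deriv

theorem integral_sq_eq_two_mul_integral_mul_weighted_deriv {a b : ℝ} (hab : a ≤ b)
    {φ φ' : ℝ → ℝ} (hcont : ContinuousOn φ (Icc a b))
    (hderiv : ∀ x ∈ Ioo a b, HasDerivAt φ (φ' x) x) (ha : φ a = 0)
    (hsq : IntegrableOn (fun x => φ x ^ 2) (Ioo a b))
    (hmul : IntegrableOn (fun x => φ x * ((b - x) * φ' x)) (Ioo a b)) :
    ∫ x in Ioo a b, φ x ^ 2 = 2 * ∫ x in Ioo a b, φ x * ((b - x) * φ' x) := by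
  have hF : ∀ x ∈ Ioo a b, HasDerivAt (fun y => φ y ^ 2 * (b - y))
      (2 * (φ x * ((b - x) * φ' x)) - φ x ^ 2) x := fun x hx => by
    refine (((hderiv x hx).fun_pow 2).fun_mul ((hasDerivAt_id' x).const_sub b)).congr_deriv ?_
    ring
  have hFTC := intervalIntegral.integral_eq_sub_of_hasDerivAt_of_le
    (f := fun y => φ y ^ 2 * (b - y)) hab
    ((hcont.pow 2).mul (continuous_const.sub continuous_id).continuousOn) hF
    ((intervalIntegrable_iff_integrableOn_Ioo_of_le hab).2 ((hmul.const_mul 2).sub hsq))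
  rw [intervalIntegral.integral_of_le hab, integral_Ioc_eq_integral_Ioo,
    integral_sub (hmul.const_mul 2) hsq, integral_const_mul] at hFTC
  simp only [sub_self, mul_zero, ha, zero_pow two_ne_zero, zero_mul] at hFTC
  linarith

theorem sqrt_le_mul_sqrt_of_le_mul_sqrt_mul_sqrt {A B c : ℝ} (hA : 0 ≤ A) (hc : 0 ≤ c)
    (h : A ≤ c * (√A * √B)) : √A ≤ c * √B := by
  rcases (Real.sqrt_nonneg A).eq_or_lt with hzero | hpos
  · rw [← hzero]
    positivity
  · refine le_of_mul_le_mul_right ?_ hpos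
    calc √A * √A = A := Real.mul_self_sqrt hA
      _ ≤ c * √B * √A := by linarith

theorem stmt5 (L : ℝ) (hL : 0 < L) (ρ : ℝ → ℝ) (hρ : ∀ x, ρ x = 1 - x / L)
    (φ φ' : ℝ → ℝ)
    (hcont : ContinuousOn φ (Icc 0 L))
    (hderiv : ∀ x ∈ Ioo (0:ℝ) L, HasDerivAt φ (φ' x) x)
    (h0 : φ 0 = 0)
    (hφL2 : IntegrableOn (fun x => (φ x) ^ 2) (Ioo 0 L))
    (hdL2 : IntegrableOn (fun x => (ρ x * φ' x) ^ 2) (Ioo 0 L)) :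
    Real.sqrt (∫ x in Ioo (0:ℝ) L, (φ x) ^ 2) ≤
      2 * L * Real.sqrt (∫ x in Ioo (0:ℝ) L, (ρ x * φ' x) ^ 2) := by
  have hφ : MemLp φ 2 (volume.restrict (Ioo 0 L)) :=
    (memLp_two_iff_integrable_sq
      ((hcont.mono Ioo_subset_Icc_self).aestronglyMeasurable measurableSet_Ioo)).2 hφL2
  have hg : MemLp (fun x => ρ x * φ' x) 2 (volume.restrict (Ioo 0 L)) := by
    refine (memLp_two_iff_integrable_sq (AEStronglyMeasurable.mul ?_
      (aestronglyMeasurable_of_hasDerivAt_of_forall_mem measurableSet_Ioo hderiv))).2 hdL2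
    exact (continuous_const.sub (continuous_id.div_const L)).aestronglyMeasurable.congr
      (.of_forall fun x => (hρ x).symm)
  have hφg : IntegrableOn (fun x => φ x * (ρ x * φ' x)) (Ioo 0 L) :=
    hφ.integrable_mul hg
  have hweight : ∀ x, φ x * ((L - x) * φ' x) = L * (φ x * (ρ x * φ' x)) := fun x => by
    rw [hρ]
    field_simp
  have henergy : ∫ x in Ioo (0:ℝ) L, φ x ^ 2 = 2 * L * ∫ x in Ioo (0:ℝ) L, φ x * (ρ x * φ' x) := by
    rw [integral_sq_eq_two_mul_integral_mul_weighted_deriv hL.le hcont hderiv h0 hφL2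
      (by simp_rw [hweight]; exact hφg.const_mul L)]
    simp only [hweight, integral_const_mul]
    ring
  refine sqrt_le_mul_sqrt_of_le_mul_sqrt_mul_sqrt (integral_nonneg fun x => sq_nonneg _)
    (by positivity) ?_
  calc ∫ x in Ioo (0:ℝ) L, φ x ^ 2 = 2 * L * ∫ x in Ioo (0:ℝ) L, φ x * (ρ x * φ' x) := henergy
    _ ≤ _ := mul_le_mul_of_nonneg_left
      (integral_mul_le_sqrt_integral_sq_mul_sqrt_integral_sq hφ hg) (by positivity)
end

section
/- (ε-dependent weighted Poincaré inequality) Let 0 < ε < L/2 and ρ_ε(x) = 1 - (x/L)(1 - ε/L). For every function R ∈ H¹((0,L); ℝ) with R(0) = 0, the inequality ‖ρ_ε R‖_{L²(0,L)} ≤ (2L/3)·‖ρ_ε² R'‖_{L²(0,L)} holds. -/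
/-!
Picone's identity: whenever `u' ≥ w + u² / p` with `p > 0`,
`p R'² - w R² + (u R²)' = (u R + p R')² / p + (u' - w - u² / p) R² ≥ 0`,
so `∫ w R² ≤ ∫ p R'²` once the boundary term `u(L) R(L)² - u(0) R(0)²` is nonpositive.
Here `w = 9 / (4 L²) ρ²`, `p = ρ⁴` and `ρ = 1 - k x` with `k L = 1 - a`, `a = ε / L`.
The ansatz `u = -k ρ³ (3/2 + Ψ(log ρ))` turns the Riccati equation `u' = w + u² / p` into
`Ψ' = Ψ² + ω²` with `k² (9/4 + ω²) = 9 / (4 L²)`, solved by `Ψ = ω tan (ω log ρ + c)`.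
The tangent stays finite on `[0, L]` and `u(L) ≤ 0` as soon as `ω log (1/a) < π/2 + γ` for some
`γ < π/2` with `ω tan γ ≤ 3/2`; `γ = π/6` or `π/4` will do, by `log (1/a) ≤ (1 - a) / √a`,
which is `t ≤ sinh t` for `t = log (1/√a)`.
-/

open Set MeasureTheory Real

lemma mul_sq_sub_le_of_riccati {w p u u' r r' : ℝ} (hp : 0 < p) (hric : w + u ^ 2 / p ≤ u') :
    w * r ^ 2 - p * r' ^ 2 ≤ u' * r ^ 2 + u * (2 * r * r') := by
  have hsq : 0 ≤ (u * r + p * r') ^ 2 / p := by positivity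
  have hexp : (u * r + p * r') ^ 2 / p = u ^ 2 / p * r ^ 2 + u * (2 * r * r') + p * r' ^ 2 := by
    field_simp; ring
  nlinarith [mul_le_mul_of_nonneg_right hric (sq_nonneg r)]

theorem setIntegral_mul_sq_le_of_riccati {a b : ℝ} (hab : a ≤ b) {w p u u' R R' : ℝ → ℝ}
    (hu : ContinuousOn u (Icc a b)) (hu' : ∀ x ∈ Ioo a b, HasDerivAt u (u' x) x)
    (hR : ContinuousOn R (Icc a b)) (hR' : ∀ x ∈ Ioo a b, HasDerivAt R (R' x) x)
    (hp : ∀ x ∈ Ioo a b, 0 < p x) (hric : ∀ x ∈ Ioo a b, w x + u x ^ 2 / p x ≤ u' x)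
    (hbdry : u b * R b ^ 2 ≤ u a * R a ^ 2)
    (hw : IntegrableOn (fun x => w x * R x ^ 2) (Ioo a b))
    (hp' : IntegrableOn (fun x => p x * R' x ^ 2) (Ioo a b)) :
    ∫ x in Ioo a b, w x * R x ^ 2 ≤ ∫ x in Ioo a b, p x * R' x ^ 2 := by
  have hint : IntegrableOn (fun x => w x * R x ^ 2 - p x * R' x ^ 2) (Icc a b) :=
    (integrableOn_Icc_iff_integrableOn_Ioo).2 (hw.sub hp')
  have hftc := intervalIntegral.integral_le_sub_of_hasDeriv_right_of_le hab
    (hu.mul (hR.pow 2)) (fun x hx => ((hu' x hx).mul ((hR' x hx).pow 2)).hasDerivWithinAt) hint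
    (fun x hx => ?_)
  · rw [intervalIntegral.integral_of_le hab, integral_Ioc_eq_integral_Ioo,
      integral_sub hw hp'] at hftc
    simp only [Pi.mul_apply, Pi.pow_apply] at hftc
    linarith
  · have := mul_sq_sub_le_of_riccati (r := R x) (r' := R' x) (hp x hx) (hric x hx)
    simp only [Pi.pow_apply]
    push_cast
    linarith

noncomputable def riccatiSol (k ω c r : ℝ) : ℝ := -k * r ^ 3 * (3 / 2 + ω * tan (ω * log r + c))

theorem hasDerivAt_riccatiSol {ρ : ℝ → ℝ} {k ω c x : ℝ} (hρ : HasDerivAt ρ (-k) x)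
    (hpos : 0 < ρ x) (hcos : cos (ω * log (ρ x) + c) ≠ 0) :
    HasDerivAt (fun y => riccatiSol k ω c (ρ y))
      (k ^ 2 * (9 / 4 + ω ^ 2) * ρ x ^ 2 + riccatiSol k ω c (ρ x) ^ 2 / ρ x ^ 4) x := by
  have hη : HasDerivAt (fun y => ω * log (ρ y) + c) (ω * (-k / ρ x)) x :=
    ((hρ.log hpos.ne').const_mul ω).add_const c
  have h : HasDerivAt (fun y => riccatiSol k ω c (ρ y)) _ x :=
    ((hρ.pow 3).const_mul (-k)).mul
      ((((hasDerivAt_tan hcos).comp x hη).const_mul ω).const_add (3 / 2))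
  refine h.congr_deriv ?_
  rw [one_div, ← inv_one_add_tan_sq hcos, inv_inv]
  simp only [Pi.pow_apply, riccatiSol]
  field_simp
  ring

lemma log_sq_le_one_sub_sq_div {a : ℝ} (ha : 0 < a) (ha1 : a ≤ 1) :
    log a ^ 2 ≤ (1 - a) ^ 2 / a := by
  set s := √a
  have hs0 : 0 < s := sqrt_pos.2 ha
  have hsa : s ^ 2 = a := sq_sqrt ha.le
  have hlog : log a = 2 * log s := by rw [← hsa, log_pow]; push_cast; ring
  have hT : 0 ≤ -log s := by
    have : log s ≤ 0 := log_nonpos hs0.le (sqrt_le_one.2 ha1)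
    linarith
  have hsinh : -log s ≤ (s⁻¹ - s) / 2 := by
    have := self_le_sinh_iff.2 hT
    rwa [sinh_eq, neg_neg, exp_neg, exp_log hs0] at this
  have hbound : -log a ≤ (1 - a) / s := by
    rw [hlog, ← hsa]; field_simp at hsinh ⊢; nlinarith
  calc log a ^ 2 = (-log a) ^ 2 := by ring
    _ ≤ ((1 - a) / s) ^ 2 := pow_le_pow_left₀ (by linarith) hbound 2
    _ = (1 - a) ^ 2 / a := by rw [div_pow, hsa]

lemma exists_angle_of_sq_eq {a ω : ℝ} (ha : 0 < a) (ha2 : a ≤ 1 / 2)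
    (hω2 : 4 * (1 - a) ^ 2 * ω ^ 2 = 9 * a * (2 - a)) :
    ∃ γ, γ < π / 2 ∧ ω * tan γ ≤ 3 / 2 ∧ ω * -log a < π / 2 + γ := by
  have hprod : (ω * -log a) ^ 2 ≤ 9 * (2 - a) / 4 := by
    have h1a : 0 < 1 - a := by linarith
    rw [mul_pow, neg_sq]
    calc ω ^ 2 * log a ^ 2 ≤ ω ^ 2 * ((1 - a) ^ 2 / a) := by
          gcongr; exact log_sq_le_one_sub_sq_div ha (by linarith)
      _ = 9 * (2 - a) / 4 := by field_simp; nlinarith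
  have hpi := pi_gt_three
  have h1a : 0 < 4 * (1 - a) ^ 2 := by nlinarith
  have hbound : ∀ γ, 0 ≤ γ → 9 * (2 - a) / 4 < (π / 2 + γ) ^ 2 → ω * -log a < π / 2 + γ :=
    fun γ hγ h => lt_of_pow_lt_pow_left₀ 2 (by positivity) (hprod.trans_lt h)
  rcases le_or_gt (1 / 4) a with h | h
  · refine ⟨π / 6, by linarith, ?_, hbound _ (by positivity) (by nlinarith)⟩
    rw [tan_pi_div_six, mul_one_div, div_le_iff₀ (by positivity)]
    refine le_of_pow_le_pow_left₀ two_ne_zero (by positivity) ?_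
    rw [mul_pow, sq_sqrt zero_le_three]
    refine le_of_mul_le_mul_left ?_ h1a
    rw [hω2]; nlinarith
  · refine ⟨π / 4, by linarith, ?_, hbound _ (by positivity) (by nlinarith)⟩
    rw [tan_pi_div_four, mul_one]
    refine le_of_pow_le_pow_left₀ two_ne_zero (by positivity) (le_of_mul_le_mul_left ?_ h1a)
    rw [hω2]; nlinarith

lemma linear_weight_mem_Icc {L a : ℝ} (hL : 0 < L) (ha1 : a ≤ 1) {ρ : ℝ → ℝ}
    (hρ : ∀ x, ρ x = 1 - (1 - a) / L * x) {x : ℝ} (hx : x ∈ Icc 0 L) : ρ x ∈ Icc a 1 := by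
  have hk : 0 ≤ (1 - a) / L := div_nonneg (by linarith) hL.le
  have hkL : (1 - a) / L * L = 1 - a := div_mul_cancel₀ _ hL.ne'
  rw [hρ]
  constructor <;> nlinarith [mul_le_mul_of_nonneg_left hx.2 hk, mul_nonneg hk hx.1]

theorem exists_riccati_supersolution {L a : ℝ} (hL : 0 < L) (ha : 0 < a) (ha2 : a ≤ 1 / 2)
    {ρ : ℝ → ℝ} (hρ : ∀ x, ρ x = 1 - (1 - a) / L * x) :
    ∃ u u' : ℝ → ℝ, ContinuousOn u (Icc 0 L) ∧ (∀ x ∈ Ioo 0 L, HasDerivAt u (u' x) x) ∧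
      (∀ x ∈ Ioo 0 L, 9 / (4 * L ^ 2) * ρ x ^ 2 + u x ^ 2 / ρ x ^ 4 ≤ u' x) ∧ u L ≤ 0 := by
  set k := (1 - a) / L with hk
  have hk0 : 0 < k := div_pos (by linarith) hL
  set ω := 3 * √(a * (2 - a)) / (2 * (1 - a)) with hω
  have hω0 : 0 ≤ ω := div_nonneg (by positivity) (by linarith)
  have hω2 : 4 * (1 - a) ^ 2 * ω ^ 2 = 9 * a * (2 - a) := by
    rw [hω, div_pow, mul_pow, sq_sqrt (by nlinarith)]
    field_simp [show 1 - a ≠ 0 by linarith]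
    ring
  obtain ⟨γ, hγ, hγω, hγT⟩ := exists_angle_of_sq_eq ha ha2 hω2
  have hρ' : ∀ x, HasDerivAt ρ (-k) x := fun x => by
    simpa [funext hρ] using ((hasDerivAt_id x).const_mul k).const_sub 1
  have hkL : k * L = 1 - a := div_mul_cancel₀ _ hL.ne'
  have hρL : ρ L = a := by rw [hρ, hkL]; ring
  have hρ_mem : ∀ x ∈ Icc 0 L, ρ x ∈ Icc a 1 := fun x hx =>
    linear_weight_mem_Icc hL (by linarith) hρ hx
  set c := -γ - ω * log a
  have hphase : ∀ x ∈ Icc 0 L, cos (ω * log (ρ x) + c) ≠ 0 := fun x hx => by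
    obtain ⟨hax, hx1⟩ := hρ_mem x hx
    have h1 : log a ≤ log (ρ x) := log_le_log ha hax
    have h2 : log (ρ x) ≤ 0 := log_nonpos (by linarith) hx1
    refine (cos_pos_of_mem_Ioo ⟨?_, ?_⟩).ne'
    · nlinarith [mul_le_mul_of_nonneg_left h1 hω0]
    · nlinarith [mul_le_mul_of_nonneg_left h2 hω0]
  have hlam : k ^ 2 * (9 / 4 + ω ^ 2) = 9 / (4 * L ^ 2) := by
    rw [hk]; field_simp; linear_combination hω2
  have hu : ∀ x ∈ Icc 0 L, HasDerivAt (fun y => riccatiSol k ω c (ρ y))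
      (9 / (4 * L ^ 2) * ρ x ^ 2 + riccatiSol k ω c (ρ x) ^ 2 / ρ x ^ 4) x := fun x hx => by
    rw [← hlam]
    exact hasDerivAt_riccatiSol (hρ' x) (by linarith [(hρ_mem x hx).1]) (hphase x hx)
  refine ⟨fun y => riccatiSol k ω c (ρ y), _, fun x hx => (hu x hx).continuousAt.continuousWithinAt,
    fun x hx => hu x (Ioo_subset_Icc_self hx), fun x _ => le_rfl, ?_⟩
  have hbdry : ω * log a + c = -γ := by ring
  simp only [riccatiSol, hρL, hbdry, tan_neg]
  have : 0 ≤ k * a ^ 3 * (3 / 2 - ω * tan γ) := by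
    have := mul_pos hk0 (pow_pos ha 3)
    nlinarith
  linarith

theorem setIntegral_sq_le_of_linear_weight {L a : ℝ} (hL : 0 < L) (ha : 0 < a) (ha2 : a ≤ 1 / 2)
    {ρ R R' : ℝ → ℝ} (hρ : ∀ x, ρ x = 1 - (1 - a) / L * x)
    (hR : ContinuousOn R (Icc 0 L)) (hR' : ∀ x ∈ Ioo 0 L, HasDerivAt R (R' x) x) (h0 : R 0 = 0)
    (hR2 : IntegrableOn (fun x => R x ^ 2) (Ioo 0 L))
    (hR'2 : IntegrableOn (fun x => R' x ^ 2) (Ioo 0 L)) :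
    ∫ x in Ioo 0 L, (ρ x * R x) ^ 2 ≤ (2 * L / 3) ^ 2 * ∫ x in Ioo 0 L, (ρ x ^ 2 * R' x) ^ 2 := by
  obtain ⟨u, u', hu, hu', hric, huL⟩ := exists_riccati_supersolution hL ha ha2 hρ
  have hρc : Continuous ρ := by rw [funext hρ]; fun_prop
  have hρpos : ∀ x ∈ Ioo 0 L, 0 < ρ x ^ 4 := fun x hx =>
    pow_pos (ha.trans_le (linear_weight_mem_Icc hL (by linarith) hρ (Ioo_subset_Icc_self hx)).1) 4
  have hbdry : u L * R L ^ 2 ≤ u 0 * R 0 ^ 2 := by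
    rw [h0]; nlinarith [sq_nonneg (R L)]
  have hmul : ∀ g : ℝ → ℝ, Continuous g → ∀ f, IntegrableOn f (Ioo 0 L) →
      IntegrableOn (fun x => g x * f x) (Ioo 0 L) := fun g hg f hf =>
    hf.continuousOn_mul_of_subset hg.continuousOn isCompact_Icc measurableSet_Ioo
      Ioo_subset_Icc_self
  have key := setIntegral_mul_sq_le_of_riccati hL.le hu hu' hR hR' hρpos hric hbdry
    (hmul _ (by fun_prop) _ hR2) (hmul _ (by fun_prop) _ hR'2)
  have hconst : (2 * L / 3) ^ 2 * (9 / (4 * L ^ 2)) = 1 := by field_simp; ring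
  calc ∫ x in Ioo 0 L, (ρ x * R x) ^ 2
      = (2 * L / 3) ^ 2 * ∫ x in Ioo 0 L, 9 / (4 * L ^ 2) * ρ x ^ 2 * R x ^ 2 := by
        simp_rw [mul_assoc (9 / (4 * L ^ 2)), integral_const_mul, ← mul_assoc, hconst, one_mul,
          mul_pow]
    _ ≤ (2 * L / 3) ^ 2 * ∫ x in Ioo 0 L, ρ x ^ 4 * R' x ^ 2 := by gcongr
    _ = (2 * L / 3) ^ 2 * ∫ x in Ioo 0 L, (ρ x ^ 2 * R' x) ^ 2 := by
        simp_rw [mul_pow, ← pow_mul]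

theorem stmt7 (L ε : ℝ) (hL : 0 < L) (hε : 0 < ε) (hεL : ε < L / 2)
    (ρ : ℝ → ℝ) (hρ : ∀ x, ρ x = 1 - (x / L) * (1 - ε / L))
    (R R' : ℝ → ℝ)
    (hcont : ContinuousOn R (Icc 0 L))
    (hderiv : ∀ x ∈ Ioo (0:ℝ) L, HasDerivAt R (R' x) x)
    (h0 : R 0 = 0)
    (hRL2 : IntegrableOn (fun x => (R x) ^ 2) (Ioo 0 L))
    (hdL2 : IntegrableOn (fun x => (R' x) ^ 2) (Ioo 0 L)) :
    Real.sqrt (∫ x in Ioo (0:ℝ) L, (ρ x * R x) ^ 2) ≤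
      (2 * L / 3) * Real.sqrt (∫ x in Ioo (0:ℝ) L, ((ρ x) ^ 2 * R' x) ^ 2) := by
  have ha2 : ε / L ≤ 1 / 2 := by rw [div_le_iff₀ hL]; linarith
  have hρ' : ∀ x, ρ x = 1 - (1 - ε / L) / L * x := fun x => by rw [hρ]; ring
  calc √(∫ x in Ioo 0 L, (ρ x * R x) ^ 2)
      ≤ √((2 * L / 3) ^ 2 * ∫ x in Ioo 0 L, (ρ x ^ 2 * R' x) ^ 2) :=
        sqrt_le_sqrt (setIntegral_sq_le_of_linear_weight hL (div_pos hε hL) ha2 hρ' hcont hderiv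
          h0 hRL2 hdL2)
    _ = 2 * L / 3 * √(∫ x in Ioo 0 L, (ρ x ^ 2 * R' x) ^ 2) := by
        rw [sqrt_mul (sq_nonneg _), sqrt_sq (by positivity)]
end

section
/- (ε-dependent weighted Poincaré inequality, first order) Let 0 < ε < L/2 and ρ_ε(x) = 1 - (x/L)(1 - ε/L). For every U ∈ H¹((0,L); ℝ) with U(0) = 0, one has ‖U‖_{L²(0,L)} ≤ 2L·‖ρ_ε U'‖_{L²(0,L)}. -/
/-!
Since `U a = 0`, integrating `((x - b) U²)' = U² - 2 U (b - x) U'` over `[a, b]` gives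
`∫ U² = ∫ 2 U (b - x) U'`, and `2 U g ≤ U² / 2 + 2 g²` turns this into the Hardy-type bound
`∫ U² ≤ 4 ∫ ((b - x) U')²`. For `b - x ≤ (b - a) w(x)`, comparing weights gives
`‖U‖₂ ≤ 2 (b - a) ‖w U'‖₂`; the weight `ρ` satisfies `L - x ≤ L ρ(x)` because `ε ≥ 0`.
-/

open Set MeasureTheory

section Interval

variable {a b : ℝ}

theorem MeasureTheory.IntegrableOn.continuousOn_mul_Ioo {f g : ℝ → ℝ}
    (hg : ContinuousOn g (Icc a b)) (hf : IntegrableOn f (Ioo a b)) : IntegrableOn (fun x => g x * f x) (Ioo a b) :=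
  (IntegrableOn.continuousOn_mul hg (by rwa [integrableOn_Icc_iff_integrableOn_Ioo])
    isCompact_Icc).mono_set Ioo_subset_Icc_self

theorem aestronglyMeasurable_of_hasDerivAt_Ioo {U U' : ℝ → ℝ}
    (hderiv : ∀ x ∈ Ioo a b, HasDerivAt U (U' x) x) :
    AEStronglyMeasurable U' (volume.restrict (Ioo a b)) := by
  refine (aestronglyMeasurable_deriv U _).congr ?_
  filter_upwards [ae_restrict_mem measurableSet_Ioo] with x hx
  exact (hderiv x hx).deriv

variable {U U' : ℝ → ℝ} (hab : a ≤ b) (hcont : ContinuousOn U (Icc a b))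
  (hderiv : ∀ x ∈ Ioo a b, HasDerivAt U (U' x) x) (ha : U a = 0)
include hab hcont hderiv ha

theorem integral_sq_eq_integral_two_mul_mul_sub_mul_deriv
    (hint : IntegrableOn (fun x => U x * ((b - x) * U' x)) (Ioo a b)) :
    ∫ x in Ioo a b, U x ^ 2 = ∫ x in Ioo a b, 2 * (U x * ((b - x) * U' x)) := by
  have hG : ∀ x ∈ Ioo a b, HasDerivAt (fun x => (x - b) * U x ^ 2)
      (U x ^ 2 - 2 * (U x * ((b - x) * U' x))) x := fun x hx =>
    (((hasDerivAt_id' x).sub_const b).fun_mul ((hderiv x hx).fun_pow 2)).congr_deriv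
      (by push_cast; ring)
  have hU2 : IntegrableOn (fun x => U x ^ 2) (Ioo a b) :=
    ((hcont.pow 2).integrableOn_Icc).mono_set Ioo_subset_Icc_self
  have hFTC := intervalIntegral.integral_eq_sub_of_hasDerivAt_of_le hab
    (f := fun x => (x - b) * U x ^ 2) (by fun_prop) hG
    ((intervalIntegrable_iff_integrableOn_Ioo_of_le hab).2 (hU2.sub (hint.const_mul 2)))
  rw [intervalIntegral.integral_of_le hab, integral_Ioc_eq_integral_Ioo,
    integral_sub hU2 (hint.const_mul 2), ha] at hFTC
  linarith

theorem integral_sq_le_four_mul_integral_sq_sub_mul_deriv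
    (hU' : IntegrableOn (fun x => U' x ^ 2) (Ioo a b)) :
    ∫ x in Ioo a b, U x ^ 2 ≤ 4 * ∫ x in Ioo a b, ((b - x) * U' x) ^ 2 := by
  set g : ℝ → ℝ := fun x => (b - x) * U' x
  have hU2 : IntegrableOn (fun x => U x ^ 2) (Ioo a b) :=
    ((hcont.pow 2).integrableOn_Icc).mono_set Ioo_subset_Icc_self
  have hg2 : IntegrableOn (fun x => g x ^ 2) (Ioo a b) := by
    simpa only [g, mul_pow] using hU'.continuousOn_mul_Ioo (g := fun x => (b - x) ^ 2)
      (by fun_prop)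
  have hUL2 : MemLp U 2 (volume.restrict (Ioo a b)) :=
    (memLp_two_iff_integrable_sq
      ((hcont.mono Ioo_subset_Icc_self).aestronglyMeasurable measurableSet_Ioo)).2 hU2
  have hgL2 : MemLp g 2 (volume.restrict (Ioo a b)) :=
    (memLp_two_iff_integrable_sq ((continuous_const.sub continuous_id).aestronglyMeasurable.mul
      (aestronglyMeasurable_of_hasDerivAt_Ioo hderiv))).2 hg2
  have hUg : IntegrableOn (fun x => U x * g x) (Ioo a b) := hUL2.integrable_mul hgL2
  have hAMGM : ∫ x in Ioo a b, 2 * (U x * g x)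
      ≤ ∫ x in Ioo a b, (U x ^ 2 / 2 + 2 * g x ^ 2) :=
    setIntegral_mono_on (hUg.const_mul 2) ((hU2.div_const 2).add (hg2.const_mul 2))
      measurableSet_Ioo fun x _ => by nlinarith [sq_nonneg (U x - 2 * g x)]
  have hibp : ∫ x in Ioo a b, U x ^ 2 = ∫ x in Ioo a b, 2 * (U x * g x) :=
    integral_sq_eq_integral_two_mul_mul_sub_mul_deriv hab hcont hderiv ha hUg
  rw [← hibp, integral_add (hU2.div_const 2) (hg2.const_mul 2), integral_div,
    integral_const_mul] at hAMGM
  show _ ≤ 4 * ∫ x in Ioo a b, g x ^ 2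
  linarith

theorem sqrt_integral_sq_le_of_sub_le_mul_weight {w : ℝ → ℝ} (hw : ContinuousOn w (Icc a b))
    (hwb : ∀ x ∈ Ioo a b, b - x ≤ (b - a) * w x)
    (hU' : IntegrableOn (fun x => U' x ^ 2) (Ioo a b)) :
    Real.sqrt (∫ x in Ioo a b, U x ^ 2) ≤
      2 * (b - a) * Real.sqrt (∫ x in Ioo a b, (w x * U' x) ^ 2) := by
  have hsub : IntegrableOn (fun x => ((b - x) * U' x) ^ 2) (Ioo a b) := by
    simpa only [mul_pow] using hU'.continuousOn_mul_Ioo (g := fun x => (b - x) ^ 2)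
      (by fun_prop)
  have hweight : IntegrableOn (fun x => (w x * U' x) ^ 2) (Ioo a b) := by
    simpa only [mul_pow] using hU'.continuousOn_mul_Ioo (g := fun x => w x ^ 2) (hw.pow 2)
  have hcompare : ∫ x in Ioo a b, ((b - x) * U' x) ^ 2
      ≤ (b - a) ^ 2 * ∫ x in Ioo a b, (w x * U' x) ^ 2 := by
    rw [← integral_const_mul]
    refine setIntegral_mono_on hsub (hweight.const_mul _) measurableSet_Ioo fun x hx => ?_
    have hsq : (b - x) ^ 2 ≤ ((b - a) * w x) ^ 2 :=
      pow_le_pow_left₀ (by linarith [hx.2]) (hwb x hx) 2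
    calc ((b - x) * U' x) ^ 2 = (b - x) ^ 2 * U' x ^ 2 := mul_pow _ _ _
      _ ≤ ((b - a) * w x) ^ 2 * U' x ^ 2 := mul_le_mul_of_nonneg_right hsq (sq_nonneg _)
      _ = (b - a) ^ 2 * (w x * U' x) ^ 2 := by ring
  have hI : 0 ≤ ∫ x in Ioo a b, (w x * U' x) ^ 2 :=
    setIntegral_nonneg measurableSet_Ioo fun x _ => sq_nonneg _
  calc Real.sqrt (∫ x in Ioo a b, U x ^ 2)
      ≤ Real.sqrt ((2 * (b - a)) ^ 2 * ∫ x in Ioo a b, (w x * U' x) ^ 2) := by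
        gcongr
        nlinarith [integral_sq_le_four_mul_integral_sq_sub_mul_deriv hab hcont hderiv ha hU']
    _ = 2 * (b - a) * Real.sqrt (∫ x in Ioo a b, (w x * U' x) ^ 2) := by
        rw [Real.sqrt_mul' _ hI, Real.sqrt_sq (by linarith)]

end Interval

theorem stmt8_general (L ε : ℝ) (hL : 0 < L) (hε : 0 < ε)
    (ρ : ℝ → ℝ) (hρ : ∀ x, ρ x = 1 - (x / L) * (1 - ε / L))
    (U U' : ℝ → ℝ)
    (hcont : ContinuousOn U (Icc 0 L))
    (hderiv : ∀ x ∈ Ioo (0:ℝ) L, HasDerivAt U (U' x) x)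
    (h0 : U 0 = 0)
    (hdL2 : IntegrableOn (fun x => (U' x) ^ 2) (Ioo 0 L)) :
    Real.sqrt (∫ x in Ioo (0:ℝ) L, (U x) ^ 2) ≤
      2 * L * Real.sqrt (∫ x in Ioo (0:ℝ) L, (ρ x * U' x) ^ 2) := by
  have hρcont : ContinuousOn ρ (Icc 0 L) := by
    rw [funext hρ]; fun_prop
  have hρge : ∀ x ∈ Ioo 0 L, L - x ≤ (L - 0) * ρ x := fun x hx => by
    have hρL : L * ρ x = L - x + x * (ε / L) := by
      rw [hρ]; field_simp; ring
    rw [sub_zero, hρL]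
    linarith [mul_pos hx.1 (div_pos hε hL)]
  simpa using sqrt_integral_sq_le_of_sub_le_mul_weight hL.le hcont hderiv h0 hρcont hρge hdL2

theorem stmt8 (L ε : ℝ) (hL : 0 < L) (hε : 0 < ε) (hεL : ε < L / 2)
    (ρ : ℝ → ℝ) (hρ : ∀ x, ρ x = 1 - (x / L) * (1 - ε / L))
    (U U' : ℝ → ℝ)
    (hcont : ContinuousOn U (Icc 0 L))
    (hderiv : ∀ x ∈ Ioo (0:ℝ) L, HasDerivAt U (U' x) x)
    (h0 : U 0 = 0)
    (hUL2 : IntegrableOn (fun x => (U x) ^ 2) (Ioo 0 L))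
    (hdL2 : IntegrableOn (fun x => (U' x) ^ 2) (Ioo 0 L)) :
    Real.sqrt (∫ x in Ioo (0:ℝ) L, (U x) ^ 2) ≤
      2 * L * Real.sqrt (∫ x in Ioo (0:ℝ) L, (ρ x * U' x) ^ 2) :=
  stmt8_general L ε hL hε ρ hρ U U' hcont hderiv h0 hdL2
end

section
/- Let ρ(x) = 1 - x/L. If φ ∈ H²_loc(0,L) satisfies φ(0) = 0, φ'(0) = 0 makes sense via ρφ' ∈ L², and ρ²φ'' ∈ L²(0,L), ρφ' ∈ L²(0,L), φ ∈ L²(0,L), then ‖φ‖_{L²(0,L)} ≤ (4L²/3)·‖ρ²φ''‖_{L²(0,L)}. -/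
/-!
With `ρ x = 1 - x / L`, the function `F = L/(2k+1) · ρ^(2k+1) u²` vanishes at `0`, is nonnegative,
and has derivative `c · (ρᵏ u)(ρᵏ⁺¹ u') - (ρᵏ u)²` with `c = 2L/(2k+1)`. Integrating over `(0, b)`
gives `∫ (ρᵏ u)² ≤ c ∫ (ρᵏ u)(ρᵏ⁺¹ u')`, and the pointwise bound `c a b ≤ a²/2 + c² b²/2`
turns this into the weighted Hardy inequality `‖ρᵏ u‖ ≤ c ‖ρᵏ⁺¹ u'‖`; letting `b → L` is harmless
because the integrands are integrable on `(0, L)`. The theorem is the case `k = 0` for `φ`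
(constant `2L`) composed with the case `k = 1` for `φ'` (constant `2L/3`).
-/

open Set MeasureTheory

lemma integrable_mul_of_integrable_sq {α : Type*} [MeasurableSpace α] {μ : Measure α}
    {f g : α → ℝ} (hf : AEStronglyMeasurable f μ) (hg : AEStronglyMeasurable g μ)
    (hf2 : Integrable (fun x => f x ^ 2) μ) (hg2 : Integrable (fun x => g x ^ 2) μ) :
    Integrable (fun x => f x * g x) μ :=
  ((memLp_two_iff_integrable_sq hf).2 hf2).integrable_mul ((memLp_two_iff_integrable_sq hg).2 hg2)

lemma integral_sq_le_of_le_mul_integral_mul {α : Type*} [MeasurableSpace α]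
    {μ : Measure α} {f g : α → ℝ} {c : ℝ}
    (hf : AEStronglyMeasurable f μ) (hg : AEStronglyMeasurable g μ)
    (hf2 : Integrable (fun x => f x ^ 2) μ) (hg2 : Integrable (fun x => g x ^ 2) μ)
    (h : ∫ x, f x ^ 2 ∂μ ≤ c * ∫ x, f x * g x ∂μ) :
    ∫ x, f x ^ 2 ∂μ ≤ c ^ 2 * ∫ x, g x ^ 2 ∂μ := by
  have amgm : ∫ x, c * (f x * g x) ∂μ ≤ ∫ x, (f x ^ 2 / 2 + c ^ 2 * g x ^ 2 / 2) ∂μ :=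
    integral_mono ((integrable_mul_of_integrable_sq hf hg hf2 hg2).const_mul c)
      ((hf2.div_const 2).add ((hg2.const_mul _).div_const 2))
      fun x => by nlinarith [sq_nonneg (f x - c * g x)]
  rw [integral_const_mul, integral_add (hf2.div_const 2) ((hg2.const_mul _).div_const 2),
    integral_div, integral_div, integral_const_mul] at amgm
  linarith

lemma intervalIntegral_le_of_forall_lt {f : ℝ → ℝ} {a b M : ℝ} (hab : a < b)
    (hf : IntegrableOn f (Ioo a b)) (h : ∀ c ∈ Ioo a b, ∫ x in a..c, f x ≤ M) :
    ∫ x in a..b, f x ≤ M := by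
  have hcont : ContinuousOn (fun c => ∫ x in a..c, f x) (closure (Ioo a b)) := by
    rw [closure_Ioo hab.ne, ← uIcc_of_le hab.le]
    exact intervalIntegral.continuousOn_primitive_interval
      (by rwa [uIcc_of_le hab.le, integrableOn_Icc_iff_integrableOn_Ioo])
  exact le_on_closure h hcont continuousOn_const
    (by rw [closure_Ioo hab.ne]; exact right_mem_Icc.2 hab.le)

lemma MeasureTheory.IntegrableOn.intervalIntegrable_of_mem_Ioo {f : ℝ → ℝ} {a c b : ℝ}
    (hf : IntegrableOn f (Ioo a c)) (hb : b ∈ Ioo a c) : IntervalIntegrable f volume a b :=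
  (intervalIntegrable_iff_integrableOn_Ioc_of_le hb.1.le).2
    (hf.mono_set fun _ hx => ⟨hx.1, hx.2.trans_lt hb.2⟩)

section Hardy

variable {L : ℝ} {u u' : ℝ → ℝ}

lemma hasDerivAt_weighted_sq (hL : L ≠ 0) (k : ℕ) {x : ℝ} (hu : HasDerivAt u (u' x) x) :
    HasDerivAt (fun y => L / (2 * k + 1) * ((1 - y / L) ^ (2 * k + 1) * u y ^ 2))
      (2 * L / (2 * k + 1) * ((1 - x / L) ^ k * u x * ((1 - x / L) ^ (k + 1) * u' x)) -
        ((1 - x / L) ^ k * u x) ^ 2) x := by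
  have hρ : HasDerivAt (fun y => 1 - y / L) (-(1 / L)) x := by
    simpa using ((hasDerivAt_id x).div_const L).const_sub 1
  refine (((hρ.pow (2 * k + 1)).mul (hu.pow 2)).const_mul (L / (2 * k + 1))).congr_deriv ?_
  simp only [Pi.pow_apply, Nat.add_sub_cancel]
  push_cast
  field_simp
  ring

lemma integral_weighted_sq_le_integral_mul (hL : 0 < L) (k : ℕ)
    (hu : ContinuousOn u (Ico 0 L)) (hu' : ∀ x ∈ Ioo 0 L, HasDerivAt u (u' x) x) (h0 : u 0 = 0)
    (hu2 : IntegrableOn (fun x => ((1 - x / L) ^ k * u x) ^ 2) (Ioo 0 L))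
    (hmul : IntegrableOn (fun x => (1 - x / L) ^ k * u x * ((1 - x / L) ^ (k + 1) * u' x))
      (Ioo 0 L))
    {b : ℝ} (hb : b ∈ Ioo 0 L) :
    ∫ x in (0)..b, ((1 - x / L) ^ k * u x) ^ 2 ≤
      2 * L / (2 * k + 1) *
        ∫ x in (0)..b, (1 - x / L) ^ k * u x * ((1 - x / L) ^ (k + 1) * u' x) := by
  have hsub : Icc 0 b ⊆ Ico 0 L := Icc_subset_Ico_right hb.2
  have hFc : ContinuousOn (fun y => L / (2 * k + 1) * ((1 - y / L) ^ (2 * k + 1) * u y ^ 2))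
      (Icc 0 b) := by
    have := hu.mono hsub
    fun_prop
  have ha := hu2.intervalIntegrable_of_mem_Ioo hb
  have hab := (hmul.intervalIntegrable_of_mem_Ioo hb).const_mul (2 * L / (2 * k + 1))
  have hftc := intervalIntegral.integral_eq_sub_of_hasDeriv_right_of_le hb.1.le hFc
    (fun x hx => (hasDerivAt_weighted_sq hL.ne' k
      (hu' x ⟨hx.1, hx.2.trans hb.2⟩)).hasDerivWithinAt) (hab.sub ha)
  rw [intervalIntegral.integral_sub hab ha, intervalIntegral.integral_const_mul] at hftc
  have hFb : 0 ≤ L / (2 * k + 1) * ((1 - b / L) ^ (2 * k + 1) * u b ^ 2) := by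
    have : 0 ≤ 1 - b / L := by rw [sub_nonneg, div_le_one hL]; exact hb.2.le
    positivity
  have hF0 : L / (2 * k + 1) * ((1 - 0 / L) ^ (2 * k + 1) * u 0 ^ 2) = 0 := by simp [h0]
  linarith

lemma integral_weighted_sq_le (hL : 0 < L) (k : ℕ)
    (hu : ContinuousOn u (Ico 0 L)) (hu' : ∀ x ∈ Ioo 0 L, HasDerivAt u (u' x) x) (h0 : u 0 = 0)
    (hu2 : IntegrableOn (fun x => ((1 - x / L) ^ k * u x) ^ 2) (Ioo 0 L))
    (hu'2 : IntegrableOn (fun x => ((1 - x / L) ^ (k + 1) * u' x) ^ 2) (Ioo 0 L)) :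
    ∫ x in Ioo 0 L, ((1 - x / L) ^ k * u x) ^ 2 ≤
      (2 * L / (2 * k + 1)) ^ 2 * ∫ x in Ioo 0 L, ((1 - x / L) ^ (k + 1) * u' x) ^ 2 := by
  have hmu : AEStronglyMeasurable u (volume.restrict (Ioo 0 L)) :=
    (hu.mono Ioo_subset_Ico_self).aestronglyMeasurable measurableSet_Ioo
  have hmu' : AEStronglyMeasurable u' (volume.restrict (Ioo 0 L)) :=
    (measurable_deriv u).aestronglyMeasurable.congr <|
      (ae_restrict_iff' measurableSet_Ioo).2 (.of_forall fun x hx => (hu' x hx).deriv)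
  have hρ : Continuous fun x : ℝ => 1 - x / L := by fun_prop
  have hf := (hρ.pow k).aestronglyMeasurable.mul hmu
  have hg := (hρ.pow (k + 1)).aestronglyMeasurable.mul hmu'
  have hmul : IntegrableOn (fun x => (1 - x / L) ^ k * u x * ((1 - x / L) ^ (k + 1) * u' x))
      (Ioo 0 L) := integrable_mul_of_integrable_sq hf hg hu2 hu'2
  have hpartial : ∀ b ∈ Ioo 0 L, ∫ x in (0)..b, ((1 - x / L) ^ k * u x) ^ 2 ≤
      (2 * L / (2 * k + 1)) ^ 2 * ∫ x in Ioo 0 L, ((1 - x / L) ^ (k + 1) * u' x) ^ 2 := by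
    intro b hb
    have hsub : Ioc 0 b ⊆ Ioo 0 L := fun x hx => ⟨hx.1, hx.2.trans_lt hb.2⟩
    have hrestr := Measure.restrict_mono hsub le_rfl (μ := volume)
    have hIBP := integral_weighted_sq_le_integral_mul hL k hu hu' h0 hu2 hmul hb
    rw [intervalIntegral.integral_of_le hb.1.le, intervalIntegral.integral_of_le hb.1.le] at hIBP
    rw [intervalIntegral.integral_of_le hb.1.le]
    calc ∫ x in Ioc 0 b, ((1 - x / L) ^ k * u x) ^ 2
        ≤ (2 * L / (2 * k + 1)) ^ 2 * ∫ x in Ioc 0 b, ((1 - x / L) ^ (k + 1) * u' x) ^ 2 :=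
          integral_sq_le_of_le_mul_integral_mul (hf.mono_measure hrestr)
            (hg.mono_measure hrestr) (hu2.mono_set hsub) (hu'2.mono_set hsub) hIBP
      _ ≤ (2 * L / (2 * k + 1)) ^ 2 * ∫ x in Ioo 0 L, ((1 - x / L) ^ (k + 1) * u' x) ^ 2 :=
          mul_le_mul_of_nonneg_left
            (setIntegral_mono_set hu'2 (.of_forall fun _ => sq_nonneg _) hsub.eventuallyLE)
            (sq_nonneg _)
  have := intervalIntegral_le_of_forall_lt hL hu2 hpartial
  rwa [intervalIntegral.integral_of_le hL.le, integral_Ioc_eq_integral_Ioo] at this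

lemma sqrt_integral_weighted_sq_le (hL : 0 < L) (k : ℕ)
    (hu : ContinuousOn u (Ico 0 L)) (hu' : ∀ x ∈ Ioo 0 L, HasDerivAt u (u' x) x) (h0 : u 0 = 0)
    (hu2 : IntegrableOn (fun x => ((1 - x / L) ^ k * u x) ^ 2) (Ioo 0 L))
    (hu'2 : IntegrableOn (fun x => ((1 - x / L) ^ (k + 1) * u' x) ^ 2) (Ioo 0 L)) :
    √(∫ x in Ioo 0 L, ((1 - x / L) ^ k * u x) ^ 2) ≤
      2 * L / (2 * k + 1) * √(∫ x in Ioo 0 L, ((1 - x / L) ^ (k + 1) * u' x) ^ 2) := by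
  calc √(∫ x in Ioo 0 L, ((1 - x / L) ^ k * u x) ^ 2)
      ≤ √((2 * L / (2 * k + 1)) ^ 2 * ∫ x in Ioo 0 L, ((1 - x / L) ^ (k + 1) * u' x) ^ 2) :=
        Real.sqrt_le_sqrt (integral_weighted_sq_le hL k hu hu' h0 hu2 hu'2)
    _ = 2 * L / (2 * k + 1) * √(∫ x in Ioo 0 L, ((1 - x / L) ^ (k + 1) * u' x) ^ 2) := by
        rw [Real.sqrt_mul' _ (integral_nonneg fun _ => sq_nonneg _), Real.sqrt_sq (by positivity)]

end Hardy

theorem stmt9 (L : ℝ) (hL : 0 < L) (ρ : ℝ → ℝ) (hρ : ∀ x, ρ x = 1 - x / L)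
    (φ φ' φ'' : ℝ → ℝ)
    (hcont : ContinuousOn φ (Ico 0 L))
    (hcont' : ContinuousOn φ' (Ico 0 L))
    (hderiv : ∀ x ∈ Ioo (0:ℝ) L, HasDerivAt φ (φ' x) x)
    (hderiv' : ∀ x ∈ Ioo (0:ℝ) L, HasDerivAt φ' (φ'' x) x)
    (h0 : φ 0 = 0) (h0' : φ' 0 = 0)
    (hφL2 : IntegrableOn (fun x => (φ x) ^ 2) (Ioo 0 L))
    (hd1L2 : IntegrableOn (fun x => (ρ x * φ' x) ^ 2) (Ioo 0 L))
    (hd2L2 : IntegrableOn (fun x => ((ρ x) ^ 2 * φ'' x) ^ 2) (Ioo 0 L)) :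
    Real.sqrt (∫ x in Ioo (0:ℝ) L, (φ x) ^ 2) ≤
      (4 * L ^ 2 / 3) * Real.sqrt (∫ x in Ioo (0:ℝ) L, ((ρ x) ^ 2 * φ'' x) ^ 2) := by
  simp only [hρ] at hd1L2 hd2L2 ⊢
  have hφ : √(∫ x in Ioo 0 L, φ x ^ 2) ≤ 2 * L * √(∫ x in Ioo 0 L, ((1 - x / L) * φ' x) ^ 2) := by
    simpa using sqrt_integral_weighted_sq_le hL 0 hcont hderiv h0
      (by simpa using hφL2) (by simpa using hd1L2)
  have hφ' : √(∫ x in Ioo 0 L, ((1 - x / L) * φ' x) ^ 2) ≤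
      2 * L / 3 * √(∫ x in Ioo 0 L, ((1 - x / L) ^ 2 * φ'' x) ^ 2) := by
    simpa [show (2 : ℝ) + 1 = 3 by norm_num] using
      sqrt_integral_weighted_sq_le hL 1 hcont' hderiv' h0' (by simpa using hd1L2) hd2L2
  calc √(∫ x in Ioo 0 L, φ x ^ 2)
      ≤ 2 * L * √(∫ x in Ioo 0 L, ((1 - x / L) * φ' x) ^ 2) := hφ
    _ ≤ 2 * L * (2 * L / 3 * √(∫ x in Ioo 0 L, ((1 - x / L) ^ 2 * φ'' x) ^ 2)) := by gcongr
    _ = 4 * L ^ 2 / 3 * √(∫ x in Ioo 0 L, ((1 - x / L) ^ 2 * φ'' x) ^ 2) := by ring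
end

section
/- (Positivity of torsional stiffness) With χ the solution of the torsion problem on ω, the St Venant torsional stiffness K = I₁ + I₂ - ‖∇χ‖²_{L²(ω)} is strictly positive, i.e., ‖∇χ‖²_{L²(ω)} < I₁ + I₂. -/
/-!
Testing the weak torsion equation with `ψ = χ` gives `‖∇χ‖² = -∫ (-X₂ ∂₁χ + X₁ ∂₂χ)`, hence
`I₁ + I₂ - ‖∇χ‖² = ∫_ω |∇χ - (X₂, -X₁)|² ≥ 0`. If this vanished, `∇χ` would agree a.e. with the
rotation field `(X₂, -X₁)`. By Fubini the agreement then holds a.e. on almost every horizontal and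
vertical line, so integrating along the four edges of a small rectangle in `ω` the increments of
`χ` add up to `-2 · area ≠ 0`, which is absurd: the rotation field has nonzero curl.
-/

open Set MeasureTheory

theorem Bornology.IsBounded.integrableOn_of_continuous {X E : Type*} [MetricSpace X]
    [ProperSpace X] [MeasurableSpace X] [BorelSpace X] [NormedAddCommGroup E]
    {μ : Measure X} [IsFiniteMeasureOnCompacts μ] {s : Set X} {f : X → E}
    (hs : Bornology.IsBounded s) (hf : Continuous f) : IntegrableOn f s μ :=
  (hf.continuousOn.integrableOn_compact hs.isCompact_closure).mono_set subset_closure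

theorem sub_eq_mul_sub_of_hasDerivAt_of_ae_eq {g g' : ℝ → ℝ} {a b c : ℝ} (hab : a ≤ b)
    (hg : ∀ x ∈ Icc a b, HasDerivAt g (g' x) x) (hg' : ∀ᵐ x, x ∈ Icc a b → g' x = c) :
    g b - g a = c * (b - a) := by
  have hg'c : ∀ᵐ x, x ∈ uIoc a b → g' x = c := by
    filter_upwards [hg'] with x hx hxab
    rw [uIoc_of_le hab] at hxab
    exact hx (Ioc_subset_Icc_self hxab)
  have hint : IntervalIntegrable g' volume a b :=
    (intervalIntegrable_congr_ae ((ae_restrict_iff' measurableSet_uIoc).2 hg'c)).2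
      intervalIntegrable_const
  rw [← intervalIntegral.integral_eq_sub_of_hasDerivAt (by rwa [uIcc_of_le hab]) hint,
    intervalIntegral.integral_congr_ae hg'c, intervalIntegral.integral_const, smul_eq_mul,
    mul_comm]

theorem sub_eq_mul_sub_of_ae_fderiv_apply_eq {E : Type*} [NormedAddCommGroup E]
    [NormedSpace ℝ E] {U : Set E} {f : E → ℝ} {γ : ℝ → E} {v : E} {a b c : ℝ}
    (hU : IsOpen U) (hf : DifferentiableOn ℝ f U) (hγ : ∀ t, HasDerivAt γ v t) (hab : a ≤ b)
    (hγU : ∀ t ∈ Icc a b, γ t ∈ U) (hf' : ∀ᵐ t, γ t ∈ U → fderiv ℝ f (γ t) v = c) :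
    f (γ b) - f (γ a) = c * (b - a) :=
  sub_eq_mul_sub_of_hasDerivAt_of_ae_eq (g := f ∘ γ) hab
    (fun t ht => ((hf _ (hγU t ht)).differentiableAt (hU.mem_nhds (hγU t ht))).hasFDerivAt
      |>.comp_hasDerivAt t (hγ t))
    (by filter_upwards [hf'] with t h ht using h (hγU t ht))

theorem not_ae_fderiv_eq_rotation {ω : Set (ℝ × ℝ)} {χ : ℝ × ℝ → ℝ} (hω : IsOpen ω)
    (hne : ω.Nonempty) (hχ : DifferentiableOn ℝ χ ω) :
    ¬ ∀ᵐ X ∂volume.restrict ω, fderiv ℝ χ X (1, 0) = X.2 ∧ fderiv ℝ χ X (0, 1) = -X.1 := by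
  intro hrot
  obtain ⟨⟨x₀, y₀⟩, h₀⟩ := hne
  obtain ⟨r, hr, hbox⟩ := Metric.nhds_basis_closedBall.mem_iff.1 (hω.mem_nhds h₀)
  rw [← closedBall_prod_same, Real.closedBall_eq_Icc, Real.closedBall_eq_Icc] at hbox
  have hrot' : ∀ᵐ X ∂(volume : Measure ℝ).prod volume,
      X ∈ ω → fderiv ℝ χ X (1, 0) = X.2 ∧ fderiv ℝ χ X (0, 1) = -X.1 := by
    rw [← Measure.volume_eq_prod]
    exact (ae_restrict_iff' hω.measurableSet).1 hrot
  have hrows : ∀ᵐ y, ∀ᵐ x, (x, y) ∈ ω → fderiv ℝ χ (x, y) (1, 0) = y :=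
    Measure.ae_ae_of_ae_prod <| Measure.measurePreserving_swap.quasiMeasurePreserving.ae
      (hrot'.mono fun X h hX => (h hX).1)
  have hcols : ∀ᵐ x, ∀ᵐ y, (x, y) ∈ ω → fderiv ℝ χ (x, y) (0, 1) = -x :=
    Measure.ae_ae_of_ae_prod (hrot'.mono fun X h hX => (h hX).2)
  obtain ⟨x₁, hx₁, hx₁r⟩ := (Measure.dense_of_ae hcols).exists_between
    (show x₀ - r < x₀ by linarith)
  obtain ⟨x₂, hx₂, hx₂r⟩ := (Measure.dense_of_ae hcols).exists_between
    (show x₀ < x₀ + r by linarith)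
  obtain ⟨y₁, hy₁, hy₁r⟩ := (Measure.dense_of_ae hrows).exists_between
    (show y₀ - r < y₀ by linarith)
  obtain ⟨y₂, hy₂, hy₂r⟩ := (Measure.dense_of_ae hrows).exists_between
    (show y₀ < y₀ + r by linarith)
  have row : ∀ y ∈ Icc (y₀ - r) (y₀ + r),
      (∀ᵐ x, (x, y) ∈ ω → fderiv ℝ χ (x, y) (1, 0) = y) →
      χ (x₂, y) - χ (x₁, y) = y * (x₂ - x₁) := fun y hy hrow =>
    sub_eq_mul_sub_of_ae_fderiv_apply_eq (γ := fun t => (t, y)) hω hχ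
      (fun t => (hasDerivAt_id t).prodMk (hasDerivAt_const t y)) (by linarith [hx₁r.2, hx₂r.1])
      (fun x hx => hbox ⟨⟨by linarith [hx.1, hx₁r.1], by linarith [hx.2, hx₂r.2]⟩, hy⟩) hrow
  have col : ∀ x ∈ Icc (x₀ - r) (x₀ + r),
      (∀ᵐ y, (x, y) ∈ ω → fderiv ℝ χ (x, y) (0, 1) = -x) →
      χ (x, y₂) - χ (x, y₁) = -x * (y₂ - y₁) := fun x hx hcol =>
    sub_eq_mul_sub_of_ae_fderiv_apply_eq (γ := fun t => (x, t)) hω hχ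
      (fun t => (hasDerivAt_const t x).prodMk (hasDerivAt_id t)) (by linarith [hy₁r.2, hy₂r.1])
      (fun y hy => hbox ⟨hx, ⟨by linarith [hy.1, hy₁r.1], by linarith [hy.2, hy₂r.2]⟩⟩) hcol
  have hbottom := row y₁ ⟨hy₁r.1.le, by linarith [hy₁r.2]⟩ hy₁
  have htop := row y₂ ⟨by linarith [hy₂r.1], hy₂r.2.le⟩ hy₂
  have hleft := col x₁ ⟨hx₁r.1.le, by linarith [hx₁r.2]⟩ hx₁
  have hright := col x₂ ⟨by linarith [hx₂r.1], hx₂r.2.le⟩ hx₂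
  -- the increments around the rectangle sum to `0 = -2 (x₂ - x₁) (y₂ - y₁)`
  nlinarith [mul_pos (sub_pos.2 (hx₁r.2.trans hx₂r.1)) (sub_pos.2 (hy₁r.2.trans hy₂r.1)),
    hbottom, htop, hleft, hright]

section Rotation

variable {ω : Set (ℝ × ℝ)} {χ : ℝ × ℝ → ℝ}

noncomputable def rotationDefect (χ : ℝ × ℝ → ℝ) (X : ℝ × ℝ) : ℝ :=
  (fderiv ℝ χ X (1, 0) - X.2) ^ 2 + (fderiv ℝ χ X (0, 1) + X.1) ^ 2

theorem rotationDefect_eq (χ : ℝ × ℝ → ℝ) :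
    rotationDefect χ = fun X => (fderiv ℝ χ X (1, 0) ^ 2 + fderiv ℝ χ X (0, 1) ^ 2)
      + (X.1 ^ 2 + X.2 ^ 2)
      + 2 * (-X.2 * fderiv ℝ χ X (1, 0) + X.1 * fderiv ℝ χ X (0, 1)) := by
  ext X
  unfold rotationDefect
  ring

theorem integrableOn_rotation_pairing
    (hgrad : IntegrableOn (fun X => fderiv ℝ χ X (1, 0) ^ 2 + fderiv ℝ χ X (0, 1) ^ 2) ω)
    (hX : IntegrableOn (fun X : ℝ × ℝ => X.1 ^ 2 + X.2 ^ 2) ω) :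
    IntegrableOn (fun X => -X.2 * fderiv ℝ χ X (1, 0) + X.1 * fderiv ℝ χ X (0, 1)) ω := by
  refine ((hgrad.add hX).div_const 2).mono' (by fun_prop) (ae_of_all _ fun X => ?_)
  set a := fderiv ℝ χ X (1, 0)
  set b := fderiv ℝ χ X (0, 1)
  rw [Real.norm_eq_abs, abs_le]
  constructor <;> simp only [Pi.add_apply] <;>
    nlinarith [sq_nonneg (a + X.2), sq_nonneg (b - X.1), sq_nonneg (a - X.2), sq_nonneg (b + X.1)]

theorem integral_rotationDefect
    (hgrad : IntegrableOn (fun X => fderiv ℝ χ X (1, 0) ^ 2 + fderiv ℝ χ X (0, 1) ^ 2) ω)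
    (hX₁ : IntegrableOn (fun X : ℝ × ℝ => X.1 ^ 2) ω)
    (hX₂ : IntegrableOn (fun X : ℝ × ℝ => X.2 ^ 2) ω)
    (hpair : IntegrableOn (fun X => -X.2 * fderiv ℝ χ X (1, 0) + X.1 * fderiv ℝ χ X (0, 1)) ω) :
    ∫ X in ω, rotationDefect χ X =
      (∫ X in ω, (fderiv ℝ χ X (1, 0) ^ 2 + fderiv ℝ χ X (0, 1) ^ 2))
        + ((∫ X in ω, X.1 ^ 2) + ∫ X in ω, X.2 ^ 2)
        + 2 * ∫ X in ω, (-X.2 * fderiv ℝ χ X (1, 0) + X.1 * fderiv ℝ χ X (0, 1)) := by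
  rw [rotationDefect_eq, integral_add ?_ (hpair.const_mul 2), integral_add hgrad ?_,
    integral_add hX₁ hX₂, integral_const_mul]
  exacts [hX₁.add hX₂, hgrad.add (hX₁.add hX₂)]

theorem integral_rotationDefect_pos (hω : IsOpen ω) (hne : ω.Nonempty)
    (hχ : DifferentiableOn ℝ χ ω) (hint : IntegrableOn (rotationDefect χ) ω) :
    0 < ∫ X in ω, rotationDefect χ X := by
  have hnonneg : 0 ≤ rotationDefect χ := fun X => by unfold rotationDefect; positivity
  refine (integral_nonneg hnonneg).lt_of_ne fun h => not_ae_fderiv_eq_rotation hω hne hχ ?_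
  filter_upwards [(integral_eq_zero_iff_of_nonneg hnonneg hint).1 h.symm] with X hX
  obtain ⟨h₁, h₂⟩ := (add_eq_zero_iff_of_nonneg (sq_nonneg _) (sq_nonneg _)).1 hX
  exact ⟨sub_eq_zero.1 (pow_eq_zero_iff two_ne_zero |>.1 h₁),
    eq_neg_of_add_eq_zero_left (pow_eq_zero_iff two_ne_zero |>.1 h₂)⟩

end Rotation

theorem stmt13_general (ω : Set (ℝ × ℝ)) (hopen : IsOpen ω) (hne : ω.Nonempty)
    (hbd : Bornology.IsBounded ω)
    (χ : ℝ × ℝ → ℝ) (hχdiff : DifferentiableOn ℝ χ ω)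
    (hgradL2 : IntegrableOn
      (fun X => (fderiv ℝ χ X (1, 0)) ^ 2 + (fderiv ℝ χ X (0, 1)) ^ 2) ω)
    (hvar : ∀ ψ : ℝ × ℝ → ℝ, DifferentiableOn ℝ ψ ω →
      (∫ X in ω, (fderiv ℝ χ X (1, 0) * fderiv ℝ ψ X (1, 0)
          + fderiv ℝ χ X (0, 1) * fderiv ℝ ψ X (0, 1))) =
        -∫ X in ω, (-X.2 * fderiv ℝ ψ X (1, 0) + X.1 * fderiv ℝ ψ X (0, 1))) :
    (∫ X in ω, ((fderiv ℝ χ X (1, 0)) ^ 2 + (fderiv ℝ χ X (0, 1)) ^ 2)) <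
      (∫ X in ω, X.1 ^ 2) + ∫ X in ω, X.2 ^ 2 := by
  have hX₁ : IntegrableOn (fun X : ℝ × ℝ => X.1 ^ 2) ω :=
    hbd.integrableOn_of_continuous (by fun_prop)
  have hX₂ : IntegrableOn (fun X : ℝ × ℝ => X.2 ^ 2) ω :=
    hbd.integrableOn_of_continuous (by fun_prop)
  have hpair := integrableOn_rotation_pairing hgradL2 (hX₁.add hX₂)
  have hdefect : IntegrableOn (rotationDefect χ) ω := by
    rw [rotationDefect_eq]
    exact (hgradL2.add (hX₁.add hX₂)).add (hpair.const_mul 2)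
  have henergy := hvar χ hχdiff
  simp only [← sq] at henergy
  have hpos := integral_rotationDefect_pos hopen hne hχdiff hdefect
  rw [integral_rotationDefect hgradL2 hX₁ hX₂ hpair] at hpos
  linarith

theorem stmt13 (ω : Set (ℝ × ℝ)) (hopen : IsOpen ω) (hne : ω.Nonempty)
    (hbd : Bornology.IsBounded ω)
    (hc1 : (∫ X in ω, X.1) = 0) (hc2 : (∫ X in ω, X.2) = 0)
    (χ : ℝ × ℝ → ℝ) (hχdiff : DifferentiableOn ℝ χ ω)
    (hχmean : (∫ X in ω, χ X) = 0)
    (hgradL2 : IntegrableOn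
      (fun X => (fderiv ℝ χ X (1, 0)) ^ 2 + (fderiv ℝ χ X (0, 1)) ^ 2) ω)
    (hvar : ∀ ψ : ℝ × ℝ → ℝ, DifferentiableOn ℝ ψ ω →
      (∫ X in ω, (fderiv ℝ χ X (1, 0) * fderiv ℝ ψ X (1, 0)
          + fderiv ℝ χ X (0, 1) * fderiv ℝ ψ X (0, 1))) =
        -∫ X in ω, (-X.2 * fderiv ℝ ψ X (1, 0) + X.1 * fderiv ℝ ψ X (0, 1))) :
    (∫ X in ω, ((fderiv ℝ χ X (1, 0)) ^ 2 + (fderiv ℝ χ X (0, 1)) ^ 2)) <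
      (∫ X in ω, X.1 ^ 2) + ∫ X in ω, X.2 ^ 2 :=
  stmt13_general ω hopen hne hbd χ hχdiff hgradL2 hvar
end

section
/- (Uniqueness for the weighted stretching ODE) Let ρ(x) = 1 - x/L, E > 0, f ∈ L²_{ρ²}(0,L). Then there is at most one U ∈ H¹_ρ(0,L) (U locally H¹, ρU' ∈ L², U ∈ L², U(0)=0) satisfying E∫₀^L ρ² U' φ' dx = ∫₀^L ρ² f φ dx for all φ ∈ C^∞[0,L] with φ(0) = 0. -/
open Set MeasureTheory

lemma stmt17_aux_meas {L : ℝ} {U V : ℝ → ℝ} (h : ∀ x ∈ Ioo (0:ℝ) L, HasDerivAt U (V x) x) :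
    AEStronglyMeasurable V (volume.restrict (Ioo (0:ℝ) L)) := by
  refine (aestronglyMeasurable_deriv U _).congr ?_
  filter_upwards [ae_restrict_mem measurableSet_Ioo] with x hx
  exact (h x hx).deriv

lemma stmt17_aux_int {L : ℝ} (hL : 0 < L) {ρ V : ℝ → ℝ} (hρ : ∀ x, ρ x = 1 - x / L)
    (hm : AEStronglyMeasurable V (volume.restrict (Ioo (0:ℝ) L)))
    (hd : IntegrableOn (fun x => (ρ x * V x) ^ 2) (Ioo 0 L))
    {ψ : ℝ → ℝ} (hψ : ContinuousOn ψ (Icc 0 L)) :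
    IntegrableOn (fun x => ρ x ^ 2 * V x * ψ x) (Ioo 0 L) := by
  have hρc : Continuous ρ := by
    have : ρ = fun x => 1 - x / L := funext hρ
    rw [this]; fun_prop
  have hρm : AEStronglyMeasurable ρ (volume.restrict (Ioo (0:ℝ) L)) :=
    hρc.aestronglyMeasurable
  have hψm : AEStronglyMeasurable ψ (volume.restrict (Ioo (0:ℝ) L)) :=
    (hψ.mono (Ioo_subset_Icc_self)).aestronglyMeasurable measurableSet_Ioo
  obtain ⟨M, hM⟩ := isCompact_Icc.exists_bound_of_continuousOn hψ
  have hg : IntegrableOn (fun x => ρ x * V x) (Ioo 0 L) := by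
    have hone : IntegrableOn (fun _ : ℝ => (1:ℝ)) (Ioo 0 L) :=
      integrableOn_const measure_Ioo_lt_top.ne (by simp)
    have hsum : IntegrableOn (fun x => (ρ x * V x) ^ 2 + 1) (Ioo 0 L) := hd.add hone
    refine Integrable.mono' hsum (hρm.mul hm) ?_
    refine Filter.Eventually.of_forall fun x => ?_
    have h1 : ‖ρ x * V x‖ = |ρ x * V x| := rfl
    rw [h1]
    nlinarith [sq_nonneg (|ρ x * V x| - 1), sq_abs (ρ x * V x), abs_nonneg (ρ x * V x)]
  have hbnd : IntegrableOn (fun x => M * ‖ρ x * V x‖) (Ioo 0 L) := hg.norm.const_mul M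
  have hρ2m : AEStronglyMeasurable (fun x => ρ x ^ 2) (volume.restrict (Ioo (0:ℝ) L)) :=
    (hρc.pow 2).aestronglyMeasurable
  refine Integrable.mono' hbnd ((hρ2m.mul hm).mul hψm) ?_
  · filter_upwards [ae_restrict_mem measurableSet_Ioo] with x hx
    have h1 : 0 < ρ x := by
      rw [hρ]; have := (div_lt_one hL).2 hx.2; linarith
    have h2 : ρ x ≤ 1 := by
      rw [hρ]; have : 0 < x / L := div_pos hx.1 hL; linarith
    have h3 : ‖ψ x‖ ≤ M := hM x ⟨hx.1.le, hx.2.le⟩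
    have h4 : ‖ρ x ^ 2 * V x * ψ x‖ = |ρ x| * ‖ρ x * V x‖ * ‖ψ x‖ := by
      have : ρ x ^ 2 * V x * ψ x = ρ x * (ρ x * V x) * ψ x := by ring
      rw [this]
      simp [abs_mul, Real.norm_eq_abs, mul_assoc]
    rw [h4]
    have h5 : |ρ x| ≤ 1 := by rw [abs_of_pos h1]; exact h2
    nlinarith [mul_nonneg (norm_nonneg (ρ x * V x)) (sub_nonneg.2 h3),
      mul_nonneg (mul_nonneg (norm_nonneg (ρ x * V x)) (norm_nonneg (ψ x))) (sub_nonneg.2 h5)]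

theorem stmt17 (L E : ℝ) (hL : 0 < L) (hE : 0 < E)
    (ρ : ℝ → ℝ) (hρ : ∀ x, ρ x = 1 - x / L)
    (f : ℝ → ℝ)
    (hf : IntegrableOn (fun x => ((ρ x) ^ 2 * f x) ^ 2) (Ioo 0 L))
    (U₁ U₂ U₁' U₂' : ℝ → ℝ)
    (hcont₁ : ContinuousOn U₁ (Ico 0 L)) (hcont₂ : ContinuousOn U₂ (Ico 0 L))
    (hderiv₁ : ∀ x ∈ Ioo (0:ℝ) L, HasDerivAt U₁ (U₁' x) x)
    (hderiv₂ : ∀ x ∈ Ioo (0:ℝ) L, HasDerivAt U₂ (U₂' x) x)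
    (h0₁ : U₁ 0 = 0) (h0₂ : U₂ 0 = 0)
    (hd₁ : IntegrableOn (fun x => (ρ x * U₁' x) ^ 2) (Ioo 0 L))
    (hd₂ : IntegrableOn (fun x => (ρ x * U₂' x) ^ 2) (Ioo 0 L))
    (hU₁ : IntegrableOn (fun x => (U₁ x) ^ 2) (Ioo 0 L))
    (hU₂ : IntegrableOn (fun x => (U₂ x) ^ 2) (Ioo 0 L))
    (hvar₁ : ∀ φ : ℝ → ℝ, ContDiff ℝ (⊤ : ℕ∞) φ → φ 0 = 0 →
      E * ∫ x in Ioo (0:ℝ) L, (ρ x) ^ 2 * U₁' x * deriv φ x =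
        ∫ x in Ioo (0:ℝ) L, (ρ x) ^ 2 * f x * φ x)
    (hvar₂ : ∀ φ : ℝ → ℝ, ContDiff ℝ (⊤ : ℕ∞) φ → φ 0 = 0 →
      E * ∫ x in Ioo (0:ℝ) L, (ρ x) ^ 2 * U₂' x * deriv φ x =
        ∫ x in Ioo (0:ℝ) L, (ρ x) ^ 2 * f x * φ x) :
    ∀ x ∈ Ico (0:ℝ) L, U₁ x = U₂ x := by
  have hm₁ := stmt17_aux_meas hderiv₁
  have hm₂ := stmt17_aux_meas hderiv₂
  have hρpos : ∀ x ∈ Ioo (0:ℝ) L, 0 < ρ x := fun x hx => by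
    rw [hρ]; have := (div_lt_one hL).2 hx.2; linarith
  -- integrability of the weighted difference against continuous weights
  have hintW : ∀ ψ : ℝ → ℝ, ContinuousOn ψ (Icc 0 L) →
      IntegrableOn (fun x => ρ x ^ 2 * (U₁' x - U₂' x) * ψ x) (Ioo 0 L) := by
    intro ψ hψ
    have h12 : IntegrableOn
        (fun x => ρ x ^ 2 * U₁' x * ψ x - ρ x ^ 2 * U₂' x * ψ x) (Ioo 0 L) :=
      (stmt17_aux_int hL hρ hm₁ hd₁ hψ).sub (stmt17_aux_int hL hρ hm₂ hd₂ hψ)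
    have heq : (fun x => ρ x ^ 2 * U₁' x * ψ x - ρ x ^ 2 * U₂' x * ψ x)
        = fun x => ρ x ^ 2 * (U₁' x - U₂' x) * ψ x := funext fun x => by ring
    rwa [heq] at h12
  -- vanishing moments
  have hmom : ∀ n : ℕ, ∫ x in Ioo (0:ℝ) L, ρ x ^ 2 * (U₁' x - U₂' x) * x ^ n = 0 := by
    intro n
    set φ : ℝ → ℝ := fun x => x ^ (n+1) / (n+1) with hφdef
    have hφd : ∀ x : ℝ, HasDerivAt φ (x ^ n) x := by
      intro x
      have h := (hasDerivAt_pow (n+1) x).div_const ((n:ℝ)+1)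
      have hne : ((n:ℝ)+1) ≠ 0 := by positivity
      simpa [hφdef, mul_div_assoc, mul_div_cancel_left₀, hne] using h
    have hφsm : ContDiff ℝ (⊤ : ℕ∞) φ := (contDiff_id.pow (n+1)).div_const _
    have hφ0 : φ 0 = 0 := by simp [hφdef]
    have hφderiv : deriv φ = fun x => x ^ n := funext fun x => (hφd x).deriv
    have e₁ := hvar₁ φ hφsm hφ0
    have e₂ := hvar₂ φ hφsm hφ0
    rw [hφderiv] at e₁ e₂
    have eq12 : ∫ x in Ioo (0:ℝ) L, ρ x ^ 2 * U₁' x * x ^ n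
        = ∫ x in Ioo (0:ℝ) L, ρ x ^ 2 * U₂' x * x ^ n :=
      mul_left_cancel₀ hE.ne' (e₁.trans e₂.symm)
    have hc : ContinuousOn (fun x : ℝ => x ^ n) (Icc 0 L) := (continuous_pow n).continuousOn
    have hint₁ := stmt17_aux_int hL hρ hm₁ hd₁ hc
    have hint₂ := stmt17_aux_int hL hρ hm₂ hd₂ hc
    have heq : (fun x => ρ x ^ 2 * (U₁' x - U₂' x) * x ^ n)
        = fun x => ρ x ^ 2 * U₁' x * x ^ n - ρ x ^ 2 * U₂' x * x ^ n := funext fun x => by ring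
    rw [heq, integral_sub hint₁ hint₂, eq12, sub_self]
  -- vanishing against polynomials
  have hpoly : ∀ p : Polynomial ℝ,
      ∫ x in Ioo (0:ℝ) L, ρ x ^ 2 * (U₁' x - U₂' x) * p.eval x = 0 := by
    intro p
    have heq : (fun x => ρ x ^ 2 * (U₁' x - U₂' x) * p.eval x)
        = fun x => ∑ i ∈ Finset.range (p.natDegree + 1),
            p.coeff i * (ρ x ^ 2 * (U₁' x - U₂' x) * x ^ i) := by
      funext x
      rw [Polynomial.eval_eq_sum_range, Finset.mul_sum]
      exact Finset.sum_congr rfl fun i _ => by ring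
    rw [heq, integral_finset_sum]
    · exact Finset.sum_eq_zero fun i _ => by rw [integral_const_mul, hmom i, mul_zero]
    · intro i _
      exact (hintW (fun x => x ^ i) (continuous_pow i).continuousOn).const_mul _
  -- vanishing against continuous functions (Weierstrass)
  have hInt : IntegrableOn (fun x => ρ x ^ 2 * (U₁' x - U₂' x)) (Ioo 0 L) := by
    have := hintW (fun _ => 1) continuousOn_const
    simpa using this
  have hcontzero : ∀ g : ℝ → ℝ, Continuous g →
      ∫ x in Ioo (0:ℝ) L, ρ x ^ 2 * (U₁' x - U₂' x) * g x = 0 := by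
    intro g hg
    set I := ∫ x in Ioo (0:ℝ) L, ρ x ^ 2 * (U₁' x - U₂' x) * g x with hI
    set C := 1 + ∫ x in Ioo (0:ℝ) L, |ρ x ^ 2 * (U₁' x - U₂' x)| with hC
    have hCpos : 0 < C := by
      have : 0 ≤ ∫ x in Ioo (0:ℝ) L, |ρ x ^ 2 * (U₁' x - U₂' x)| :=
        integral_nonneg fun x => abs_nonneg _
      rw [hC]; linarith
    have key : ∀ ε : ℝ, 0 < ε → |I| ≤ ε * C := by
      intro ε hε
      obtain ⟨p, hp⟩ := exists_polynomial_near_of_continuousOn 0 L g hg.continuousOn ε hε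
      have hIg := hintW g hg.continuousOn
      have hIp := hintW (fun x => p.eval x) p.continuous.continuousOn
      have hstep : I = ∫ x in Ioo (0:ℝ) L, ρ x ^ 2 * (U₁' x - U₂' x) * (g x - p.eval x) := by
        have heq : (fun x => ρ x ^ 2 * (U₁' x - U₂' x) * (g x - p.eval x))
            = fun x => ρ x ^ 2 * (U₁' x - U₂' x) * g x
              - ρ x ^ 2 * (U₁' x - U₂' x) * p.eval x := funext fun x => by ring
        rw [heq, integral_sub hIg hIp, hpoly p, sub_zero]
      have hIgp : IntegrableOn (fun x => ρ x ^ 2 * (U₁' x - U₂' x) * (g x - p.eval x))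
          (Ioo 0 L) := hintW _ (hg.continuousOn.sub p.continuous.continuousOn)
      rw [hstep]
      have habs : |∫ x in Ioo (0:ℝ) L, ρ x ^ 2 * (U₁' x - U₂' x) * (g x - p.eval x)|
          ≤ ∫ x in Ioo (0:ℝ) L, |ρ x ^ 2 * (U₁' x - U₂' x) * (g x - p.eval x)| := by
        simpa only [Real.norm_eq_abs] using
          norm_integral_le_integral_norm (μ := volume.restrict (Ioo (0:ℝ) L))
            (fun x => ρ x ^ 2 * (U₁' x - U₂' x) * (g x - p.eval x))
      refine habs.trans ?_
      have hmono : ∫ x in Ioo (0:ℝ) L, |ρ x ^ 2 * (U₁' x - U₂' x) * (g x - p.eval x)|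
          ≤ ∫ x in Ioo (0:ℝ) L, ε * |ρ x ^ 2 * (U₁' x - U₂' x)| := by
        refine integral_mono_ae hIgp.abs ((hInt.abs).const_mul ε) ?_
        filter_upwards [ae_restrict_mem measurableSet_Ioo] with x hx
        have h1 : |g x - p.eval x| ≤ ε := by
          have := hp x ⟨hx.1.le, hx.2.le⟩
          rw [abs_sub_comm]; exact this.le
        rw [abs_mul]
        exact mul_le_mul_of_nonneg_left h1 (abs_nonneg _) |>.trans
          (le_of_eq (mul_comm _ _))
      refine hmono.trans ?_
      rw [integral_const_mul]
      have : 0 ≤ ∫ x in Ioo (0:ℝ) L, |ρ x ^ 2 * (U₁' x - U₂' x)| :=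
        integral_nonneg fun x => abs_nonneg _
      rw [hC]; nlinarith
    by_contra hne
    have hpos : 0 < |I| := abs_pos.2 hne
    have := key (|I| / (2 * C)) (by positivity)
    rw [div_mul_eq_mul_div, mul_comm] at this
    have h2 : C * |I| / (2 * C) = |I| / 2 := by field_simp
    rw [h2] at this
    linarith
  -- fundamental lemma: the weighted derivative difference vanishes a.e.
  have hae : ∀ᵐ x ∂(volume.restrict (Ioo (0:ℝ) L)), ρ x ^ 2 * (U₁' x - U₂' x) = 0 := by
    refine ae_eq_zero_of_integral_contDiff_smul_eq_zero
      (f := fun x => ρ x ^ 2 * (U₁' x - U₂' x)) hInt.locallyIntegrable ?_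
    intro g hg _
    refine Eq.trans ?_ (hcontzero g hg.continuous)
    refine integral_congr_ae (Filter.Eventually.of_forall fun x => ?_)
    simp only [smul_eq_mul]
    ring
  have hW : ∀ᵐ x : ℝ, x ∈ Ioo (0:ℝ) L → U₁' x - U₂' x = 0 := by
    have h := (ae_restrict_iff' measurableSet_Ioo).1 hae
    filter_upwards [h] with x hx hxm
    have h1 := hx hxm
    have h2 : ρ x ≠ 0 := (hρpos x hxm).ne'
    rcases mul_eq_zero.mp h1 with h | h
    · exact absurd h (pow_ne_zero 2 h2)
    · exact h
  -- conclude via FTC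
  intro b hb
  rcases eq_or_lt_of_le hb.1 with heq | hb0
  · rw [← heq, h0₁, h0₂]
  · have hbL := hb.2
    have hsub : Icc (0:ℝ) b ⊆ Ico 0 L := fun x hx => ⟨hx.1, lt_of_le_of_lt hx.2 hbL⟩
    have hiint : IntervalIntegrable (fun x => U₁' x - U₂' x) volume 0 b := by
      rw [intervalIntegrable_iff, uIoc_of_le hb0.le]
      have hres : volume.restrict (Ioc (0:ℝ) b) = volume.restrict (Ioo (0:ℝ) b) :=
        (Measure.restrict_congr_set Ioo_ae_eq_Ioc).symm
      rw [IntegrableOn, hres]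
      refine (integrable_zero _ _ _).congr ?_
      filter_upwards [ae_restrict_mem measurableSet_Ioo, ae_restrict_of_ae hW] with x hx1 hx2
      exact (hx2 ⟨hx1.1, hx1.2.trans hbL⟩).symm
    have hFTC := intervalIntegral.integral_eq_sub_of_hasDerivAt_of_le hb0.le
      (f := fun x => U₁ x - U₂ x) (f' := fun x => U₁' x - U₂' x)
      ((hcont₁.mono hsub).sub (hcont₂.mono hsub))
      (fun x hx => ((hderiv₁ x ⟨hx.1, hx.2.trans hbL⟩).sub
        (hderiv₂ x ⟨hx.1, hx.2.trans hbL⟩)))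
      hiint
    have hbne : ∀ᵐ x : ℝ, x ≠ b := by
      have hset : {x : ℝ | ¬ x ≠ b} = {b} := by ext y; simp
      rw [ae_iff, hset]; exact measure_singleton b
    have hI0 : ∫ x in (0:ℝ)..b, (U₁' x - U₂' x) = 0 := by
      have hcong : ∫ x in (0:ℝ)..b, (U₁' x - U₂' x) = ∫ x in (0:ℝ)..b, (0:ℝ) := by
        refine intervalIntegral.integral_congr_ae ?_
        filter_upwards [hW, hbne] with x h1 h2 hmem
        have hm' : x ∈ Ioc (0:ℝ) b := by rwa [uIoc_of_le hb0.le] at hmem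
        exact h1 ⟨hm'.1, (lt_of_le_of_ne hm'.2 h2).trans hbL⟩
      simpa using hcong
    rw [hI0] at hFTC
    have h2 : U₁ b - U₂ b - (U₁ 0 - U₂ 0) = 0 := by simpa using hFTC.symm
    rw [h0₁, h0₂] at h2
    linarith
end
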